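/- Let G be a finite simple graph, let uv ∈ E(G), and let H be obtained from G by subdividing the edge uv exactly four times, with new path u, e_1, e_2, e_3, e_4, v. Then from any total dominating set D of G one can construct a total dominating set of H of size |D| + 2: if D ∩ {u,v} = ∅ add {e_2, e_3}; if u ∈ D and v ∉ D add {e_3, e_4}; if v ∈ D and u ∉ D add {e_1, e_2}; if u, v ∈ D add {e_1, e_4}. In particular, γ_t(H) ≤ γ_t(G) + 2. -/

import Mathlib

/-! Every vertex of `G` keeps its dominator from `D` in `H = subdivide4 G u v`, except that the
edge `uv` is gone: `e₃` takes over for `u ∈ D` and `e₀` for `v ∈ D`. The two added path vertices,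
together with those of `u, v` lying in `D`, dominate `e₀, …, e₃`. Applied to a minimum total
dominating set of `G` this gives `γ_t(H) ≤ γ_t(G) + 2`. -/

open SimpleGraph

/-- `D` is a total dominating set of `G`: every vertex has a neighbour in `D`. -/
def IsTotalDomSet {V : Type*} (G : SimpleGraph V) (D : Set V) : Prop :=
  ∀ v : V, ∃ u ∈ D, G.Adj u v

/-- `x` and `y` are (distinct or not) at distance at most two:
adjacent or joined through a common neighbour. -/
def WithinTwo {V : Type*} (G : SimpleGraph V) (x y : V) : Prop :=
  G.Adj x y ∨ ∃ z, G.Adj x z ∧ G.Adj z y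

/-- `x` and `y` are at distance exactly two. -/
def DistTwo {V : Type*} (G : SimpleGraph V) (x y : V) : Prop :=
  x ≠ y ∧ ¬ G.Adj x y ∧ ∃ z, G.Adj x z ∧ G.Adj z y

/-- `D` is a semitotal dominating set of `G`: a dominating set in which every
vertex of `D` has another vertex of `D` within distance two (a witness). -/
def IsSemitotalDomSet {V : Type*} (G : SimpleGraph V) (D : Set V) : Prop :=
  (∀ v : V, v ∉ D → ∃ u ∈ D, G.Adj u v) ∧
  (∀ x ∈ D, ∃ y ∈ D, y ≠ x ∧ WithinTwo G x y)

/-- The total domination number `γ_t`. -/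
noncomputable def totalDomNum {V : Type*} (G : SimpleGraph V) [Fintype V] : ℕ :=
  sInf {n | ∃ D : Set V, IsTotalDomSet G D ∧ D.ncard = n}

/-- The semitotal domination number `γ_{t2}`. -/
noncomputable def semitotalDomNum {V : Type*} (G : SimpleGraph V) [Fintype V] : ℕ :=
  sInf {n | ∃ D : Set V, IsSemitotalDomSet G D ∧ D.ncard = n}

/-- The graph obtained from `G` by contracting the edge `xy`:
delete `y` and merge it into `x`. -/
def contractEdge {V : Type*} (G : SimpleGraph V) (x y : V) :
    SimpleGraph {v : V // v ≠ y} :=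
  SimpleGraph.fromRel (fun a b =>
    G.Adj a.1 b.1 ∨ (a.1 = x ∧ G.Adj y b.1) ∨ (b.1 = x ∧ G.Adj y a.1))

/-- A bundled finite simple graph. -/
structure FGraph : Type 1 where
  V : Type
  fin : Fintype V
  G : SimpleGraph V

attribute [instance] FGraph.fin

noncomputable def FGraph.tdn (A : FGraph) : ℕ := totalDomNum A.G

noncomputable def FGraph.stdn (A : FGraph) : ℕ := semitotalDomNum A.G

/-- `B` is obtained from `A` by contracting a single edge. -/
def FGraph.Contract (A B : FGraph) : Prop :=
  ∃ x y : A.V, A.G.Adj x y ∧ ∃ e : B.V ≃ {v : A.V // v ≠ y},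
    ∀ a b : B.V, B.G.Adj a b ↔ (contractEdge A.G x y).Adj (e a) (e b)

/-- `B` is obtained from `A` by a sequence of `n` edge contractions. -/
inductive ContractStar : ℕ → FGraph → FGraph → Prop
  | refl (A : FGraph) : ContractStar 0 A A
  | step {n : ℕ} {A B C : FGraph} : A.Contract B → ContractStar n B C →
      ContractStar (n + 1) A C

/-- At most `k` edge contractions suffice to decrease the total domination number by one. -/
def ctTDLe (A : FGraph) (k : ℕ) : Prop :=
  ∃ n ≤ k, ∃ B : FGraph, ContractStar n A B ∧ B.tdn = A.tdn - 1

/-- At most `k` edge contractions suffice to decrease the semitotal domination number by one. -/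
def ctSTLe (A : FGraph) (k : ℕ) : Prop :=
  ∃ n ≤ k, ∃ B : FGraph, ContractStar n A B ∧ B.stdn = A.stdn - 1

/-- `ct_{γ_t}`: the minimum number of edge contractions needed to decrease `γ_t` by one. -/
noncomputable def ctTDNum (A : FGraph) : ℕ :=
  sInf {n | ∃ B : FGraph, ContractStar n A B ∧ B.tdn = A.tdn - 1}

/-- `ct_{γ_{t2}}`: the minimum number of edge contractions needed to decrease `γ_{t2}` by one. -/
noncomputable def ctSTNum (A : FGraph) : ℕ :=
  sInf {n | ∃ B : FGraph, ContractStar n A B ∧ B.stdn = A.stdn - 1}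

/-- Disjoint union of two simple graphs. -/
def disjGraphUnion {α β : Type*} (G : SimpleGraph α) (H : SimpleGraph β) :
    SimpleGraph (α ⊕ β) :=
  SimpleGraph.fromRel (fun a b =>
    match a, b with
    | Sum.inl a, Sum.inl b => G.Adj a b
    | Sum.inr a, Sum.inr b => H.Adj a b
    | _, _ => False)

/-- The graph obtained from `G` by subdividing the edge `uv` exactly four times:
`uv` is replaced by the path `u, e₀, e₁, e₂, e₃, v`. -/
def subdivide4 {V : Type*} (G : SimpleGraph V) (u v : V) :
    SimpleGraph (V ⊕ Fin 4) :=
  SimpleGraph.fromRel (fun a b =>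
    match a, b with
    | Sum.inl a, Sum.inl b => G.Adj a b ∧ ¬((a = u ∧ b = v) ∨ (a = v ∧ b = u))
    | Sum.inl a, Sum.inr i => (a = u ∧ i = 0) ∨ (a = v ∧ i = 3)
    | Sum.inr i, Sum.inr j => (i : ℕ) + 1 = (j : ℕ)
    | _, _ => False)

section subdivide4

variable {V : Type*} {G : SimpleGraph V} {u v : V}

theorem subdivide4_adj_inl_inl {a b : V} (h : G.Adj a b) (hne : s(a, b) ≠ s(u, v)) :
    (subdivide4 G u v).Adj (Sum.inl a) (Sum.inl b) := by
  simp only [subdivide4, fromRel_adj, ne_eq, Sum.inl.injEq, h.ne, not_false_eq_true,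
    true_and]
  exact Or.inl ⟨h, by simpa [Sym2.eq_iff] using hne⟩

theorem subdivide4_adj_inl_zero : (subdivide4 G u v).Adj (Sum.inl u) (Sum.inr 0) := by
  simp [subdivide4]

theorem subdivide4_adj_inl_three : (subdivide4 G u v).Adj (Sum.inl v) (Sum.inr 3) := by
  simp [subdivide4]

theorem subdivide4_adj_inr_inr {i j : Fin 4} (h : (i : ℕ) + 1 = j ∨ (j : ℕ) + 1 = i) :
    (subdivide4 G u v).Adj (Sum.inr i) (Sum.inr j) := by
  simp only [subdivide4, fromRel_adj, ne_eq, Sum.inr.injEq]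
  exact ⟨by omega, h⟩

theorem IsTotalDomSet.extend_subdivide4 [DecidableEq V] {D : Finset V} {E : Finset (Fin 4)}
    (hD : IsTotalDomSet G ↑D) (hu : u ∈ D → 3 ∈ E) (hv : v ∈ D → 0 ∈ E)
    (hpath : ∀ i : Fin 4, (u ∈ D ∧ i = 0) ∨ (v ∈ D ∧ i = 3) ∨
      ∃ j ∈ E, (j : ℕ) + 1 = i ∨ (i : ℕ) + 1 = j) :
    IsTotalDomSet (subdivide4 G u v) ↑(D.image Sum.inl ∪ E.image Sum.inr) := by
  rintro (a | i)
  · obtain ⟨d, hd, hda⟩ := hD a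
    by_cases hedge : s(d, a) = s(u, v)
    · rcases Sym2.eq_iff.mp hedge with ⟨rfl, rfl⟩ | ⟨rfl, rfl⟩
      · exact ⟨Sum.inr 3, by simpa using hu hd, subdivide4_adj_inl_three.symm⟩
      · exact ⟨Sum.inr 0, by simpa using hv hd, subdivide4_adj_inl_zero.symm⟩
    · exact ⟨Sum.inl d, by simpa using hd, subdivide4_adj_inl_inl hda hedge⟩
  · rcases hpath i with ⟨hu, rfl⟩ | ⟨hv, rfl⟩ | ⟨j, hj, hji⟩
    · exact ⟨Sum.inl u, by simpa using hu, subdivide4_adj_inl_zero⟩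
    · exact ⟨Sum.inl v, by simpa using hv, subdivide4_adj_inl_three⟩
    · exact ⟨Sum.inr j, by simpa using hj, subdivide4_adj_inr_inr hji⟩

end subdivide4

theorem Finset.image_inl_union_image_inr {α β : Type*} [DecidableEq α] [DecidableEq β]
    (s : Finset α) (t : Finset β) : s.image Sum.inl ∪ t.image Sum.inr = s.disjSum t := by
  ext (a | b) <;> simp

def subdivisionChoice (pu pv : Prop) [Decidable pu] [Decidable pv] : Finset (Fin 4) :=
  if pu then (if pv then {0, 3} else {2, 3}) else (if pv then {0, 1} else {1, 2})

section subdivisionChoice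

variable (pu pv : Prop) [Decidable pu] [Decidable pv]

theorem card_subdivisionChoice : (subdivisionChoice pu pv).card = 2 := by
  unfold subdivisionChoice; split_ifs <;> rfl

theorem subdivisionChoice_dominates_path (i : Fin 4) : (pu ∧ i = 0) ∨ (pv ∧ i = 3) ∨
    ∃ j ∈ subdivisionChoice pu pv, (j : ℕ) + 1 = i ∨ (i : ℕ) + 1 = j := by
  unfold subdivisionChoice
  by_cases hu : pu <;> by_cases hv : pv <;> fin_cases i <;> simp [hu, hv]

variable {pu pv}

theorem three_mem_subdivisionChoice (h : pu) : 3 ∈ subdivisionChoice pu pv := by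
  unfold subdivisionChoice; split_ifs <;> decide

theorem zero_mem_subdivisionChoice (h : pv) : 0 ∈ subdivisionChoice pu pv := by
  unfold subdivisionChoice; split_ifs <;> decide

end subdivisionChoice

section

variable {V : Type*} [DecidableEq V] {G : SimpleGraph V} {u v : V}

theorem IsTotalDomSet.extend_subdivide4_subdivisionChoice {D : Finset V}
    (hD : IsTotalDomSet G ↑D) :
    IsTotalDomSet (subdivide4 G u v)
      ↑(D.image Sum.inl ∪ (subdivisionChoice (u ∈ D) (v ∈ D)).image Sum.inr) :=
  hD.extend_subdivide4 three_mem_subdivisionChoice zero_mem_subdivisionChoice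
    (subdivisionChoice_dominates_path _ _)

theorem card_image_inl_union_image_inr_subdivisionChoice (D : Finset V) :
    (D.image Sum.inl ∪ (subdivisionChoice (u ∈ D) (v ∈ D)).image Sum.inr).card = D.card + 2 := by
  rw [Finset.image_inl_union_image_inr, Finset.card_disjSum, card_subdivisionChoice]

end

section totalDomNum

variable {V : Type*} [Fintype V] {G : SimpleGraph V}

theorem totalDomNum_le_card {D : Finset V} (hD : IsTotalDomSet G ↑D) : totalDomNum G ≤ D.card :=
  Nat.sInf_le ⟨↑D, hD, Set.ncard_coe_finset D⟩

theorem exists_isTotalDomSet_card_eq_totalDomNum {S : Set V} (hS : IsTotalDomSet G S) :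
    ∃ D : Finset V, IsTotalDomSet G ↑D ∧ D.card = totalDomNum G := by
  obtain ⟨D, hD, hcard⟩ := Nat.sInf_mem (s := {n | ∃ D : Set V, IsTotalDomSet G D ∧ D.ncard = n})
    ⟨_, S, hS, rfl⟩
  refine ⟨D.toFinite.toFinset, by simpa using hD, ?_⟩
  rw [totalDomNum, ← hcard, Set.ncard_eq_toFinset_card]

theorem totalDomNum_subdivide4_le [DecidableEq V] {u v : V} {S : Set V}
    (hS : IsTotalDomSet G S) : totalDomNum (subdivide4 G u v) ≤ totalDomNum G + 2 := by
  obtain ⟨D, hD, hcard⟩ := exists_isTotalDomSet_card_eq_totalDomNum hS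
  calc totalDomNum (subdivide4 G u v)
      ≤ (D.image Sum.inl ∪ (subdivisionChoice (u ∈ D) (v ∈ D)).image Sum.inr).card :=
        totalDomNum_le_card hD.extend_subdivide4_subdivisionChoice
    _ = totalDomNum G + 2 := by
        rw [card_image_inl_union_image_inr_subdivisionChoice, hcard]

end totalDomNum

theorem stmt9_general {V : Type*} [Fintype V] [DecidableEq V] (G : SimpleGraph V)
    (u v : V) (D : Finset V) (hD : IsTotalDomSet G ↑D)
    (E : Finset (Fin 4))
    (hE : E = if u ∈ D then (if v ∈ D then ({0, 3} : Finset (Fin 4)) else {2, 3})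
          else (if v ∈ D then {0, 1} else {1, 2})) :
    IsTotalDomSet (subdivide4 G u v) ↑(D.image Sum.inl ∪ E.image Sum.inr) ∧
    (D.image Sum.inl ∪ E.image Sum.inr).card = D.card + 2 ∧
    totalDomNum (subdivide4 G u v) ≤ totalDomNum G + 2 := by
  subst hE
  exact ⟨hD.extend_subdivide4_subdivisionChoice,
    card_image_inl_union_image_inr_subdivisionChoice D, totalDomNum_subdivide4_le hD⟩

/-- From any total dominating set `D` of `G`, adding the two prescribed
subdivision vertices (`{e₁,e₂}` if `D ∩ {u,v} = ∅`; `{e₂,e₃}` if only `u ∈ D`;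
`{e₀,e₁}` if only `v ∈ D`; `{e₀,e₃}` if `u, v ∈ D`) yields a total dominating
set of the 4-subdivision `H` of size `|D| + 2`; in particular
`γ_t(H) ≤ γ_t(G) + 2`. -/
theorem stmt9 {V : Type*} [Fintype V] [DecidableEq V] (G : SimpleGraph V)
    (u v : V) (huv : G.Adj u v) (D : Finset V) (hD : IsTotalDomSet G ↑D)
    (E : Finset (Fin 4))
    (hE : E = if u ∈ D then (if v ∈ D then ({0, 3} : Finset (Fin 4)) else {2, 3})
          else (if v ∈ D then {0, 1} else {1, 2})) :
    IsTotalDomSet (subdivide4 G u v) ↑(D.image Sum.inl ∪ E.image Sum.inr) ∧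
    (D.image Sum.inl ∪ E.image Sum.inr).card = D.card + 2 ∧
    totalDomNum (subdivide4 G u v) ≤ totalDomNum G + 2 :=
  stmt9_general G u v D hD E hE
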